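/- For a finite nonempty set A, η > 0, and Q₁, Q₂ : A → ℝ, the softmax distributions π_i(a) = exp(ηQ_i(a))/Σ_{a'}exp(ηQ_i(a')) satisfy ‖π₁ − π₂‖_TV ≤ η·‖Q₁ − Q₂‖_∞, where TV is half the ℓ1 distance. -/

import Mathlib

/-!
Putting both softmax distributions over the common denominator `Z x * Z y`, with
`Z x = ∑ b, exp (x b)`, gives
`softmax x a - softmax y a = ∑ b, (exp (x a + y b) - exp (y a + x b)) / (Z x * Z y)`.
Each term is controlled by `|eᵘ - eᵛ| ≤ (eᵘ + eᵛ)/2 · |u - v|` (that is, `tanh t ≤ t`), where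
`u - v = (x a - y a) - (x b - y b)` only sees the oscillation of `x - y`, and the weights
`(eᵘ + eᵛ)/2` sum over `a, b` to exactly `Z x * Z y`.
-/

open Real Finset

namespace Real

theorem mul_sinh_nonneg (s : ℝ) : 0 ≤ s * sinh s := by
  rcases le_total 0 s with hs | hs
  · exact mul_nonneg hs (sinh_nonneg_iff.mpr hs)
  · exact mul_nonneg_of_nonpos_of_nonpos hs (sinh_nonpos_iff.mpr hs)

theorem sinh_le_mul_cosh {t : ℝ} (ht : 0 ≤ t) : sinh t ≤ t * cosh t := by
  have hderiv : ∀ s, HasDerivAt (fun s => s * cosh s - sinh s) (s * sinh s) s := fun s =>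
    (((hasDerivAt_id' s).mul (hasDerivAt_cosh s)).sub (hasDerivAt_sinh s)).congr_deriv (by ring)
  have hmono := monotone_of_hasDerivAt_nonneg hderiv mul_sinh_nonneg
  simpa using hmono ht

theorem abs_sinh_le_abs_mul_cosh (t : ℝ) : |sinh t| ≤ |t| * cosh t := by
  rcases le_total 0 t with ht | ht
  · rw [abs_of_nonneg ht, abs_of_nonneg (sinh_nonneg_iff.mpr ht)]
    exact sinh_le_mul_cosh ht
  · rw [abs_of_nonpos ht, abs_of_nonpos (sinh_nonpos_iff.mpr ht), ← sinh_neg, ← cosh_neg t]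
    exact sinh_le_mul_cosh (neg_nonneg.mpr ht)

theorem abs_exp_sub_exp_le (u v : ℝ) : |exp u - exp v| ≤ (exp u + exp v) / 2 * |u - v| := by
  obtain ⟨m, t, rfl, rfl⟩ : ∃ m t, u = m + t ∧ v = m - t :=
    ⟨(u + v) / 2, (u - v) / 2, by ring, by ring⟩
  have hsub : exp (m + t) - exp (m - t) = 2 * exp m * sinh t := by
    rw [sinh_eq, sub_eq_add_neg m t, exp_add, exp_add]; ring
  have hadd : exp (m + t) + exp (m - t) = 2 * exp m * cosh t := by
    rw [cosh_eq, sub_eq_add_neg m t, exp_add, exp_add]; ring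
  have hdiff : |m + t - (m - t)| = 2 * |t| := by
    rw [show m + t - (m - t) = 2 * t by ring, abs_mul, abs_two]
  rw [hsub, hadd, hdiff, abs_mul, abs_of_pos (by positivity)]
  nlinarith [abs_sinh_le_abs_mul_cosh t, exp_pos m]

end Real

section Softmax

variable {A : Type*} [Fintype A]

noncomputable def softmax (x : A → ℝ) (a : A) : ℝ := exp (x a) / ∑ b, exp (x b)

theorem sum_exp_pos [Nonempty A] (x : A → ℝ) : 0 < ∑ b, exp (x b) :=
  sum_pos (fun _ _ => exp_pos _) univ_nonempty

theorem softmax_sub_softmax [Nonempty A] (x y : A → ℝ) (a : A) :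
    softmax x a - softmax y a =
      (∑ b, (exp (x a + y b) - exp (y a + x b))) / ((∑ b, exp (x b)) * ∑ b, exp (y b)) := by
  rw [softmax, softmax, div_sub_div _ _ (sum_exp_pos x).ne' (sum_exp_pos y).ne', sum_sub_distrib]
  simp only [exp_add, ← mul_sum]
  ring

theorem sum_sum_exp_add_add_exp_add (x y : A → ℝ) :
    ∑ a, ∑ b, (exp (x a + y b) + exp (y a + x b)) = 2 * ((∑ b, exp (x b)) * ∑ b, exp (y b)) := by
  simp only [exp_add, sum_add_distrib, ← mul_sum, ← sum_mul]
  ring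

theorem sum_abs_softmax_sub_softmax_le [Nonempty A] {x y : A → ℝ} {d : ℝ}
    (h : ∀ a b, |(x a - y a) - (x b - y b)| ≤ d) :
    ∑ a, |softmax x a - softmax y a| ≤ d := by
  have hZ : 0 < (∑ b, exp (x b)) * ∑ b, exp (y b) := mul_pos (sum_exp_pos x) (sum_exp_pos y)
  have hterm : ∀ a b, |exp (x a + y b) - exp (y a + x b)| ≤
      (exp (x a + y b) + exp (y a + x b)) / 2 * d := fun a b => by
    refine (abs_exp_sub_exp_le _ _).trans (mul_le_mul_of_nonneg_left ?_ (by positivity))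
    have hab := h a b
    rwa [show x a - y a - (x b - y b) = x a + y b - (y a + x b) by ring] at hab
  calc ∑ a, |softmax x a - softmax y a|
      = (∑ a, |∑ b, (exp (x a + y b) - exp (y a + x b))|) /
          ((∑ b, exp (x b)) * ∑ b, exp (y b)) := by
        rw [sum_div]
        refine sum_congr rfl fun a _ => ?_
        rw [softmax_sub_softmax, abs_div, abs_of_pos hZ]
    _ ≤ (∑ a, ∑ b, (exp (x a + y b) + exp (y a + x b)) / 2 * d) /
          ((∑ b, exp (x b)) * ∑ b, exp (y b)) := by
        gcongr with a
        exact (abs_sum_le_sum_abs _ _).trans (sum_le_sum fun b _ => hterm a b)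
    _ = d := by
        simp only [← sum_mul, ← sum_div, sum_sum_exp_add_add_exp_add]
        field_simp

theorem sum_abs_softmax_sub_softmax_le_two_mul [Nonempty A] {x y : A → ℝ} {c : ℝ}
    (h : ∀ a, |x a - y a| ≤ c) :
    ∑ a, |softmax x a - softmax y a| ≤ 2 * c :=
  sum_abs_softmax_sub_softmax_le fun a b =>
    (abs_sub _ _).trans (by linarith [h a, h b])

end Softmax

/-- The softmax (tempered-policy) map is Lipschitz in the sup norm:
TV(π₁, π₂) ≤ η·‖Q₁ − Q₂‖_∞, with TV equal to half the ℓ1 distance. -/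
theorem stmt12 {A : Type*} [Fintype A] [Nonempty A] (η : ℝ) (hη : 0 < η)
    (Q₁ Q₂ : A → ℝ)
    (π₁ π₂ : A → ℝ)
    (hπ₁ : ∀ a, π₁ a = Real.exp (η * Q₁ a) / ∑ a', Real.exp (η * Q₁ a'))
    (hπ₂ : ∀ a, π₂ a = Real.exp (η * Q₂ a) / ∑ a', Real.exp (η * Q₂ a')) :
    (1 / 2) * ∑ a, |π₁ a - π₂ a| ≤ η * ⨆ a, |Q₁ a - Q₂ a| := by
  obtain rfl : π₁ = softmax (η * Q₁ ·) := funext hπ₁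
  obtain rfl : π₂ = softmax (η * Q₂ ·) := funext hπ₂
  have hQ : ∀ a, |η * Q₁ a - η * Q₂ a| ≤ η * ⨆ a, |Q₁ a - Q₂ a| := fun a => by
    rw [← mul_sub, abs_mul, abs_of_pos hη]
    exact mul_le_mul_of_nonneg_left
      (le_ciSup (f := fun a => |Q₁ a - Q₂ a|) (Set.finite_range _).bddAbove a) hη.le
  linarith [sum_abs_softmax_sub_softmax_le_two_mul hQ]
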